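/- Let S₀ and S₁ be disjoint nonempty finite sets of n-bit strings, let m and s be positive integers, let ℓ > 0, and let R be a randomized map from m-tuples of n-bit strings to probability distributions on a finite set. Assume R is splitting ℓ-lossy for s-uniform distributions supported on (S₀,S₁). Then for every distribution D₀ that is uniform over a multiset of at most s elements entirely contained in S₀ or entirely contained in S₁, it holds that E_{y∼D₀, π}[ Δ( R(π(D₀^{⊗(m−1)}, y)), R(π(D₀^{⊗m})) ) ] ≤ δ, where π is a uniformly random permutation of the m input positions and δ := min{√(ℓ·ln 2/(2m)), 1 − 2^{−ℓ/m−2}}. -/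

import Mathlib

/-- Total variation (statistical) distance between two functions on a finite set. -/
noncomputable def tv {β : Type*} [Fintype β] (P Q : β → ℝ) : ℝ :=
  (1 / 2) * ∑ b, |P b - Q b|

/-- Mutual information (in bits) of a joint pmf `q` on a product of finite sets. -/
noncomputable def mutualInfo {γ β : Type*} [Fintype γ] [Fintype β] (q : γ → β → ℝ) : ℝ :=
  ∑ v, ∑ b,
    if q v b = 0 then 0 else
      q v b * Real.logb 2 (q v b / ((∑ b', q v b') * (∑ v', q v' b)))

/-- Output distribution of a randomized map `R` on `m` independent inputs
drawn from the distributions `D i`. -/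
noncomputable def outDist {ι β : Type*} [Fintype ι] [Fintype β] {m : ℕ}
    (R : (Fin m → ι) → β → ℝ) (D : Fin m → ι → ℝ) : β → ℝ :=
  fun b => ∑ v : Fin m → ι, (∏ i, D i (v i)) * R v b

/-- Joint law of `m` independent inputs drawn from the `D i` together with the
output of the randomized map `R` on them. -/
noncomputable def jointLaw {ι β : Type*} [Fintype ι] [Fintype β] {m : ℕ}
    (R : (Fin m → ι) → β → ℝ) (D : Fin m → ι → ℝ) : (Fin m → ι) → β → ℝ :=
  fun v b => (∏ i, D i (v i)) * R v b

/-- `D` is uniform over some multiset of at most `s` elements, all lying in `S`. -/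
def IsUnifOver {ι : Type*} [DecidableEq ι] (s : ℕ) (S : Finset ι) (D : ι → ℝ) : Prop :=
  ∃ K : Multiset ι, K ≠ 0 ∧ K.card ≤ s ∧ (∀ a ∈ K, a ∈ S) ∧
    ∀ a, D a = (K.count a : ℝ) / (K.card : ℝ)

/-- `R` is splitting `ℓ`-lossy for `s`-uniform distributions supported on `(S₀, S₁)`:
for every tuple of mutually independent inputs, each uniform over a multiset of at
most `s` elements contained in `S₀` or in `S₁`, `I(X; R(X)) ≤ ℓ` (in bits). -/
def SplittingLossy {ι β : Type*} [Fintype ι] [DecidableEq ι] [Fintype β] {m : ℕ}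
    (R : (Fin m → ι) → β → ℝ) (ℓ : ℝ) (s : ℕ) (S₀ S₁ : Finset ι) : Prop :=
  ∀ D : Fin m → ι → ℝ,
    (∀ i, IsUnifOver s S₀ (D i) ∨ IsUnifOver s S₁ (D i)) →
    mutualInfo (jointLaw R D) ≤ ℓ

/-- Point mass at `y`. -/
noncomputable def pointMass {ι : Type*} [DecidableEq ι] (y : ι) : ι → ℝ :=
  fun a => if a = y then 1 else 0

/-- `δ := min { √(ℓ·ln 2/(2m)), 1 - 2^(−ℓ/m − 2) }`. -/
noncomputable def deltaOf (ℓ : ℝ) (m : ℕ) : ℝ :=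
  min (Real.sqrt (ℓ * Real.log 2 / (2 * (m : ℝ))))
      (1 - (2 : ℝ) ^ (-(ℓ / (m : ℝ)) - 2))

section Aux
open Finset


private noncomputable def gAux (t : ℝ) : ℝ := (t+1) * Real.log t - 2*t + 2
private noncomputable def hAux (t : ℝ) : ℝ :=
  2*(t+2)*(t * Real.log t - t + 1) - 3*(t-1)^2

private lemma gAux_deriv {t : ℝ} (ht : 0 < t) :
    HasDerivAt gAux (Real.log t + 1/t - 1) t := by
  have h1 : HasDerivAt (fun t : ℝ => (t+1) * Real.log t)
      (1 * Real.log t + (t+1) * t⁻¹) t :=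
    ((hasDerivAt_id t).add_const 1).mul (Real.hasDerivAt_log ht.ne')
  have h2 : HasDerivAt (fun t : ℝ => (t+1) * Real.log t - 2*t + 2)
      (1 * Real.log t + (t+1) * t⁻¹ - 2*1) t :=
    (h1.sub ((hasDerivAt_id t).const_mul 2)).add_const 2
  show HasDerivAt (fun t : ℝ => (t+1) * Real.log t - 2*t + 2) _ t
  convert h2 using 1
  field_simp
  ring

private lemma gAux_mono : MonotoneOn gAux (Set.Ioi 0) := by
  apply monotoneOn_of_deriv_nonneg (convex_Ioi 0)
  · intro x hx
    exact (gAux_deriv hx).continuousAt.continuousWithinAt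
  · rw [interior_Ioi]
    intro x hx
    exact (gAux_deriv hx).differentiableAt.differentiableWithinAt
  · rw [interior_Ioi]
    intro x hx
    rw [(gAux_deriv hx).deriv]
    have := Real.one_sub_inv_le_log_of_pos hx
    have : 1 - 1/x ≤ Real.log x := by rw [one_div]; exact this
    linarith

private lemma hAux_deriv {t : ℝ} (ht : 0 < t) :
    HasDerivAt hAux (4 * gAux t) t := by
  have h1 : HasDerivAt (fun t : ℝ => t * Real.log t - t + 1)
      ((Real.log t + 1) - 1) t :=
    ((Real.hasDerivAt_mul_log ht.ne').sub (hasDerivAt_id t)).add_const 1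
  have h2 : HasDerivAt (fun t : ℝ => 2*(t+2))
      (2 * 1) t := ((hasDerivAt_id t).add_const 2).const_mul 2
  have h3 : HasDerivAt (fun t : ℝ => 2*(t+2)*(t * Real.log t - t + 1))
      ((2*1) * (t * Real.log t - t + 1) + (2*(t+2)) * ((Real.log t + 1) - 1)) t :=
    h2.mul h1
  have h4 : HasDerivAt (fun t : ℝ => 3*(t-1)^2) (3*(2*(t-1))) t := by
    have : HasDerivAt (fun t : ℝ => (t-1)^2) (2*(t-1)^1*1) t :=
      ((hasDerivAt_id t).sub_const 1).pow 2
    simpa using this.const_mul 3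
  have h5 := h3.sub h4
  show HasDerivAt (fun t : ℝ => 2*(t+2)*(t * Real.log t - t + 1) - 3*(t-1)^2) _ t
  refine h5.congr_deriv ?_
  unfold gAux
  ring

private lemma hAux_nonneg {t : ℝ} (ht : 0 ≤ t) : 0 ≤ hAux t := by
  have hcont : Continuous hAux := by
    unfold hAux
    have := Real.continuous_mul_log
    continuity
  have hA1 : hAux 1 = 0 := by simp [hAux]
  have g1 : gAux 1 = 0 := by simp [gAux]
  rcases le_or_gt t 1 with h1 | h1
  · -- antitone on Icc 0 1
    have hanti : AntitoneOn hAux (Set.Icc 0 1) := by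
      apply antitoneOn_of_deriv_nonpos (convex_Icc 0 1) hcont.continuousOn
      · rw [interior_Icc]
        intro x hx
        exact (hAux_deriv hx.1).differentiableAt.differentiableWithinAt
      · rw [interior_Icc]
        intro x hx
        rw [(hAux_deriv hx.1).deriv]
        have : gAux x ≤ gAux 1 := gAux_mono hx.1 (by norm_num) hx.2.le
        rw [g1] at this
        linarith
    have := hanti ⟨ht, h1⟩ (by norm_num : (1:ℝ) ∈ Set.Icc 0 1) h1
    rw [hA1] at this; exact this
  · have hmono : MonotoneOn hAux (Set.Ici 1) := by
      apply monotoneOn_of_deriv_nonneg (convex_Ici 1) hcont.continuousOn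
      · rw [interior_Ici]
        intro x hx
        have hx0 : (0:ℝ) < x := lt_trans one_pos hx
        exact (hAux_deriv hx0).differentiableAt.differentiableWithinAt
      · rw [interior_Ici]
        intro x hx
        have hx0 : (0:ℝ) < x := lt_trans one_pos hx
        rw [(hAux_deriv hx0).deriv]
        have : gAux 1 ≤ gAux x := gAux_mono (by norm_num) hx0 hx.le
        rw [g1] at this
        linarith
    have := hmono (by norm_num : (1:ℝ) ∈ Set.Ici 1) (Set.mem_Ici.mpr h1.le) h1.le
    rw [hA1] at this; exact this
  
private lemma pinsker_scalar {t : ℝ} (ht : 0 ≤ t) :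
    3*(t-1)^2 ≤ 2*(t+2)*(t * Real.log t - t + 1) := by
  have := hAux_nonneg ht
  unfold hAux at this
  linarith




noncomputable def klNat {β : Type*} [Fintype β] (P Q : β → ℝ) : ℝ :=
  ∑ b, if P b = 0 then 0 else P b * Real.log (P b / Q b)

section KL
variable {β : Type*} [Fintype β] {P Q : β → ℝ}

private lemma klNat_ge (hP0 : ∀ b, 0 ≤ P b) (hQ0 : ∀ b, 0 ≤ Q b)
    (habs : ∀ b, Q b = 0 → P b = 0) :
    (∑ b, P b) - (∑ b, Q b) ≤ klNat P Q := by
  rw [← Finset.sum_sub_distrib]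
  apply Finset.sum_le_sum
  intro b _
  by_cases hp : P b = 0
  · simp [hp, klNat, hQ0 b]
  · simp only [hp, if_false]
    have hq : 0 < Q b := (hQ0 b).lt_of_ne fun h => hp (habs b h.symm)
    have hp' : 0 < P b := (hP0 b).lt_of_ne (Ne.symm hp)
    have h1 : 1 - (P b / Q b)⁻¹ ≤ Real.log (P b / Q b) :=
      Real.one_sub_inv_le_log_of_pos (div_pos hp' hq)
    have h2 : (P b / Q b)⁻¹ = Q b / P b := by rw [inv_div]
    rw [h2] at h1
    have := mul_le_mul_of_nonneg_left h1 (hP0 b)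
    calc P b - Q b = P b * (1 - Q b / P b) := by field_simp
    _ ≤ P b * Real.log (P b / Q b) := mul_le_mul_of_nonneg_left h1 (hP0 b)

private lemma klNat_nonneg (hP0 : ∀ b, 0 ≤ P b) (hQ0 : ∀ b, 0 ≤ Q b)
    (hP1 : ∑ b, P b = 1) (hQ1 : ∑ b, Q b ≤ 1)
    (habs : ∀ b, Q b = 0 → P b = 0) : 0 ≤ klNat P Q := by
  have := klNat_ge hP0 hQ0 habs
  rw [hP1] at this; linarith

private lemma tv_nonneg : 0 ≤ tv P Q := by
  unfold tv
  have : (0:ℝ) ≤ ∑ b, |P b - Q b| := Finset.sum_nonneg fun b _ => abs_nonneg _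
  linarith

private lemma pinsker (hP0 : ∀ b, 0 ≤ P b) (hQ0 : ∀ b, 0 ≤ Q b)
    (hP1 : ∑ b, P b = 1) (hQ1 : ∑ b, Q b = 1)
    (habs : ∀ b, Q b = 0 → P b = 0) :
    tv P Q ≤ Real.sqrt (klNat P Q / 2) := by
  have hkl : 0 ≤ klNat P Q := klNat_nonneg hP0 hQ0 hP1 hQ1.le habs
  rw [Real.le_sqrt tv_nonneg (by linarith)]
  -- reduce to (∑ |P-Q|)² ≤ 2 klNat
  have key : (∑ b, |P b - Q b|)^2 ≤ 2 * klNat P Q := by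
    set f : β → ℝ := fun b => Real.sqrt ((2/3) * (P b + 2*Q b)) with hf
    set g : β → ℝ := fun b => if P b + 2*Q b = 0 then 0 else |P b - Q b| / f b with hg
    have hfg : ∀ b, f b * g b = |P b - Q b| := by
      intro b
      by_cases h : P b + 2*Q b = 0
      · have hp : P b = 0 := by nlinarith [hP0 b, hQ0 b]
        have hq : Q b = 0 := by nlinarith [hP0 b, hQ0 b]
        simp [hg, h, hp, hq]
      · have hpos : 0 < P b + 2*Q b := lt_of_le_of_ne (by nlinarith [hP0 b, hQ0 b]) (Ne.symm h)
        have hfpos : 0 < f b := Real.sqrt_pos.mpr (by linarith)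
        simp only [hg, h, if_false]
        field_simp
    have hcs := Finset.sum_mul_sq_le_sq_mul_sq Finset.univ f g
    have hsf : ∑ b, f b ^ 2 = 2 := by
      have : ∀ b, f b ^ 2 = (2/3) * (P b + 2*Q b) := by
        intro b
        rw [hf]
        exact Real.sq_sqrt (by nlinarith [hP0 b, hQ0 b])
      rw [Finset.sum_congr rfl fun b _ => this b]
      rw [Finset.sum_congr rfl (fun b _ => by ring :
        ∀ b ∈ Finset.univ, (2/3) * (P b + 2*Q b) = (2/3) * P b + (4/3) * Q b)]
      rw [Finset.sum_add_distrib, ← Finset.mul_sum, ← Finset.mul_sum, hP1, hQ1]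
      norm_num
    have hsg : ∑ b, g b ^ 2 ≤ klNat P Q := by
      have expand : klNat P Q = ∑ b, ((if P b = 0 then 0 else P b * Real.log (P b / Q b)) - P b + Q b) := by
        unfold klNat
        rw [Finset.sum_add_distrib, Finset.sum_sub_distrib, hP1, hQ1]
        ring
      rw [expand]
      apply Finset.sum_le_sum
      intro b _
      by_cases h : P b + 2*Q b = 0
      · have hp : P b = 0 := by nlinarith [hP0 b, hQ0 b]
        have hq : Q b = 0 := by nlinarith [hP0 b, hQ0 b]
        simp [hg, h, hp, hq]
      · have hpos : 0 < P b + 2*Q b := lt_of_le_of_ne (by nlinarith [hP0 b, hQ0 b]) (Ne.symm h)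
        have hq : 0 < Q b := by
          rcases (hQ0 b).lt_or_eq with h' | h'
          · exact h'
          · exfalso; have := habs b h'.symm; rw [this, ← h'] at hpos; simp at hpos
        have hf2 : f b ^ 2 = (2/3) * (P b + 2*Q b) := Real.sq_sqrt (by nlinarith)
        have hfpos : 0 < f b := Real.sqrt_pos.mpr (by linarith)
        simp only [hg, h, if_false]
        rw [div_pow, hf2, sq_abs]
        rw [div_le_iff₀ (by nlinarith)]
        by_cases hp : P b = 0
        · simp only [hp, if_pos]
          nlinarith
        · simp only [hp, if_false]
          have hp' : 0 < P b := (hP0 b).lt_of_ne (Ne.symm hp)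
          have hs := pinsker_scalar (le_of_lt (div_pos hp' hq) : (0:ℝ) ≤ P b / Q b)
          have e1 : (P b / Q b - 1) * Q b = P b - Q b := by field_simp
          have e2 : (P b / Q b + 2) * Q b = P b + 2*Q b := by field_simp
          have e3 : (P b / Q b * Real.log (P b / Q b) - P b / Q b + 1) * Q b
              = P b * Real.log (P b / Q b) - P b + Q b := by field_simp
          have hs2 : 3*(P b - Q b)^2
              ≤ 2*(P b + 2*Q b)*(P b * Real.log (P b / Q b) - P b + Q b) := by
            calc 3*(P b - Q b)^2 = (3*(P b / Q b - 1)^2) * Q b^2 := by rw [← e1]; ring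
            _ ≤ (2*(P b / Q b + 2)*(P b / Q b * Real.log (P b / Q b) - P b / Q b + 1)) * Q b^2 :=
                mul_le_mul_of_nonneg_right hs (sq_nonneg _)
            _ = 2*((P b / Q b + 2) * Q b)*((P b / Q b * Real.log (P b / Q b) - P b / Q b + 1) * Q b) := by
                ring
            _ = _ := by rw [e2, e3]
          nlinarith [hs2]
    calc (∑ b, |P b - Q b|)^2 = (∑ b, f b * g b)^2 := by
          rw [Finset.sum_congr rfl fun b _ => (hfg b).symm]
    _ ≤ (∑ b, f b ^ 2) * ∑ b, g b ^ 2 := hcs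
    _ ≤ 2 * klNat P Q := by rw [hsf]; exact mul_le_mul_of_nonneg_left hsg (by norm_num)
  unfold tv
  nlinarith [key]

end KL

section BH
variable {β : Type*} [Fintype β] {P Q : β → ℝ}

private lemma min_eq_half (a b : ℝ) : min a b = (a + b - |a - b|)/2 := by
  rcases le_total a b with h | h
  · rw [min_eq_left h, abs_of_nonpos (by linarith)]; ring
  · rw [min_eq_right h, abs_of_nonneg (by linarith)]; ring

private lemma max_eq_half (a b : ℝ) : max a b = (a + b + |a - b|)/2 := by
  rcases le_total a b with h | h
  · rw [max_eq_right h, abs_of_nonpos (by linarith)]; ring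
  · rw [max_eq_left h, abs_of_nonneg (by linarith)]; ring

private lemma bh (hP0 : ∀ b, 0 ≤ P b) (hQ0 : ∀ b, 0 ≤ Q b)
    (hP1 : ∑ b, P b = 1) (hQ1 : ∑ b, Q b = 1)
    (habs : ∀ b, Q b = 0 → P b = 0) :
    tv P Q ≤ 1 - Real.exp (-(klNat P Q)) / 2 := by
  have habssum : ∑ b, |P b - Q b| = 2 * tv P Q := by unfold tv; ring
  have hmin : ∑ b, min (P b) (Q b) = 1 - tv P Q := by
    rw [Finset.sum_congr rfl fun b _ => min_eq_half (P b) (Q b)]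
    rw [← Finset.sum_div, Finset.sum_sub_distrib, Finset.sum_add_distrib, hP1, hQ1, habssum]
    ring
  have hmax : ∑ b, max (P b) (Q b) = 1 + tv P Q := by
    rw [Finset.sum_congr rfl fun b _ => max_eq_half (P b) (Q b)]
    rw [← Finset.sum_div, Finset.sum_add_distrib, Finset.sum_add_distrib, hP1, hQ1, habssum]
    ring
  have htv1 : tv P Q ≤ 1 := by
    have : ∑ b, |P b - Q b| ≤ ∑ b, (P b + Q b) := by
      apply Finset.sum_le_sum
      intro b _
      exact abs_sub_le_iff.mpr ⟨by linarith [hQ0 b], by linarith [hP0 b]⟩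
    rw [Finset.sum_add_distrib, hP1, hQ1] at this
    unfold tv; linarith
  set S := ∑ b, Real.sqrt (P b * Q b) with hS
  -- Cauchy-Schwarz: S² ≤ (∑ min)(∑ max)
  have hCS : S^2 ≤ (1 - tv P Q) * (1 + tv P Q) := by
    have h1 : ∀ b, Real.sqrt (P b * Q b)
        = Real.sqrt (min (P b) (Q b)) * Real.sqrt (max (P b) (Q b)) := by
      intro b
      rw [← Real.sqrt_mul (le_min (hP0 b) (hQ0 b)), min_mul_max]
    have h2 := Finset.sum_mul_sq_le_sq_mul_sq Finset.univ
      (fun b => Real.sqrt (min (P b) (Q b))) (fun b => Real.sqrt (max (P b) (Q b)))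
    have h3 : ∀ b, Real.sqrt (min (P b) (Q b)) ^ 2 = min (P b) (Q b) :=
      fun b => Real.sq_sqrt (le_min (hP0 b) (hQ0 b))
    have h4 : ∀ b, Real.sqrt (max (P b) (Q b)) ^ 2 = max (P b) (Q b) :=
      fun b => Real.sq_sqrt (le_max_of_le_left (hP0 b))
    calc S^2 = (∑ b, Real.sqrt (min (P b) (Q b)) * Real.sqrt (max (P b) (Q b)))^2 := by
          rw [hS, Finset.sum_congr rfl fun b _ => h1 b]
    _ ≤ (∑ b, Real.sqrt (min (P b) (Q b))^2) * ∑ b, Real.sqrt (max (P b) (Q b))^2 := h2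
    _ = (1 - tv P Q) * (1 + tv P Q) := by
        rw [Finset.sum_congr rfl fun b _ => h3 b, Finset.sum_congr rfl fun b _ => h4 b,
          hmin, hmax]
  -- Jensen: exp(-klNat) ≤ S²
  set T := Finset.univ.filter (fun b => P b ≠ 0) with hT
  have hsumT : ∑ b ∈ T, P b = 1 := by
    rw [← hP1]
    apply Finset.sum_subset (Finset.filter_subset _ _)
    intro b _ hb
    simp only [hT, Finset.mem_filter, Finset.mem_univ, true_and, not_not] at hb
    exact hb
  have hTpos : ∀ b ∈ T, 0 < P b ∧ 0 < Q b := by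
    intro b hb
    simp only [hT, Finset.mem_filter] at hb
    have hp : 0 < P b := (hP0 b).lt_of_ne (Ne.symm hb.2)
    have hq : 0 < Q b := (hQ0 b).lt_of_ne fun h => hb.2 (habs b h.symm)
    exact ⟨hp, hq⟩
  have hS' : S = ∑ b ∈ T, Real.sqrt (P b * Q b) := by
    rw [hS]
    apply (Finset.sum_subset (Finset.filter_subset _ _) _).symm
    intro b _ hb
    simp only [hT, Finset.mem_filter, Finset.mem_univ, true_and, not_not] at hb
    rw [hb, zero_mul, Real.sqrt_zero]
  have hST : ∑ b ∈ T, P b * Real.sqrt (Q b / P b) = S := by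
    rw [hS']
    apply Finset.sum_congr rfl
    intro b hb
    obtain ⟨hp, hq⟩ := hTpos b hb
    rw [Real.sqrt_mul (hP0 b), Real.sqrt_div (hQ0 b)]
    calc P b * (Real.sqrt (Q b) / Real.sqrt (P b))
        = (P b / Real.sqrt (P b)) * Real.sqrt (Q b) := by ring
    _ = Real.sqrt (P b) * Real.sqrt (Q b) := by rw [Real.div_sqrt]
  have hTne : T.Nonempty := by
    apply Finset.nonempty_of_sum_ne_zero (f := fun b => P b)
    rw [hsumT]; norm_num
  have hSpos : 0 < S := by
    rw [hS']
    apply Finset.sum_pos _ hTne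
    intro b hb
    obtain ⟨hp, hq⟩ := hTpos b hb
    exact Real.sqrt_pos.mpr (mul_pos hp hq)
  have hklT : klNat P Q = ∑ b ∈ T, P b * Real.log (P b / Q b) := by
    unfold klNat
    rw [show (∑ b, if P b = 0 then 0 else P b * Real.log (P b / Q b))
        = ∑ b ∈ T, (if P b = 0 then 0 else P b * Real.log (P b / Q b)) by
      apply (Finset.sum_subset (Finset.filter_subset _ _) _).symm
      intro b _ hb
      simp only [hT, Finset.mem_filter, Finset.mem_univ, true_and, not_not] at hb
      simp [hb]]
    apply Finset.sum_congr rfl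
    intro b hb
    simp only [hT, Finset.mem_filter] at hb
    simp [hb.2]
  have hjensen : -(klNat P Q) / 2 ≤ Real.log S := by
    have hconc := (strictConcaveOn_log_Ioi.concaveOn).le_map_sum
      (t := T) (w := fun b => P b) (p := fun b => Real.sqrt (Q b / P b))
      (fun b hb => (hTpos b hb).1.le) hsumT
      (fun b hb => Set.mem_Ioi.mpr (Real.sqrt_pos.mpr (div_pos (hTpos b hb).2 (hTpos b hb).1)))
    simp only [smul_eq_mul] at hconc
    rw [hST] at hconc
    have hLHS : ∑ b ∈ T, P b * Real.log (Real.sqrt (Q b / P b)) = -(klNat P Q) / 2 := by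
      have hterm : ∀ b ∈ T, P b * Real.log (Real.sqrt (Q b / P b))
          = -(P b * Real.log (P b / Q b)) / 2 := by
        intro b hb
        obtain ⟨hp, hq⟩ := hTpos b hb
        rw [Real.log_sqrt (div_pos hq hp).le,
          show Q b / P b = (P b / Q b)⁻¹ by rw [inv_div], Real.log_inv]
        ring
      rw [Finset.sum_congr rfl hterm, hklT]
      rw [← Finset.sum_div, ← Finset.sum_neg_distrib]
    rw [hLHS] at hconc
    exact hconc
  have hexp : Real.exp (-(klNat P Q)) ≤ S^2 := by
    have h := Real.exp_le_exp.mpr hjensen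
    rw [Real.exp_log hSpos] at h
    have hid : Real.exp (-(klNat P Q)) = (Real.exp (-(klNat P Q)/2))^2 := by
      rw [sq, ← Real.exp_add]
      ring_nf
    rw [hid]
    have := Real.exp_pos (-(klNat P Q)/2)
    nlinarith
  nlinarith [tv_nonneg (P := P) (Q := Q), htv1, hexp, hCS, hSpos]

end BH



private lemma super {ι : Type*} [Fintype ι] [DecidableEq ι] {m : ℕ}
    (c : (Fin m → ι) → ℝ) (D : ι → ℝ)
    (hc0 : ∀ v, 0 ≤ c v) (hc1 : ∑ v, c v = 1)
    (hD0 : ∀ a, 0 ≤ D a)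
    (habs : ∀ v, c v ≠ 0 → ∀ i, D (v i) ≠ 0) :
    ∑ j : Fin m, ∑ y : ι, (if (∑ v, if v j = y then c v else 0) = 0 then 0
        else (∑ v, if v j = y then c v else 0) *
          Real.log ((∑ v, if v j = y then c v else 0) / D y))
      ≤ ∑ v, (if c v = 0 then 0 else c v * Real.log (c v / ∏ i, D (v i))) := by
  classical
  set cj : Fin m → ι → ℝ := fun j y => ∑ v, if v j = y then c v else 0 with hcj
  have hcj0 : ∀ j y, 0 ≤ cj j y := fun j y =>
    Finset.sum_nonneg fun v _ => by split <;> simp [hc0 v]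
  have hcjy : ∀ j (v : Fin m → ι), c v ≤ cj j (v j) := by
    intro j v
    have := Finset.single_le_sum (f := fun v' => if v' j = v j then c v' else 0)
      (fun v' _ => by split <;> simp [hc0 v']) (Finset.mem_univ v)
    simpa using this
  have hcjsum : ∀ j, ∑ y, cj j y = 1 := by
    intro j
    rw [hcj]
    rw [Finset.sum_comm]
    rw [← hc1]
    apply Finset.sum_congr rfl
    intro v _
    simp
  set f : Fin m → ι → ℝ := fun j y => if cj j y = 0 then 0 else Real.log (cj j y / D y)
    with hfd
  set e : (Fin m → ι) → ℝ := fun v => ∏ j, cj j (v j) with he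
  have he0 : ∀ v, 0 ≤ e v := fun v => Finset.prod_nonneg fun j _ => hcj0 j (v j)
  have hesum : ∑ v, e v = 1 := by
    rw [he]
    have h := Finset.sum_prod_piFinset (Finset.univ : Finset ι) (fun j y => cj j y)
    rw [Fintype.piFinset_univ] at h
    rw [h]
    rw [Finset.prod_congr rfl fun j _ => hcjsum j]
    simp
  have heabs : ∀ v, e v = 0 → c v = 0 := by
    intro v hv
    by_contra hc
    have : ∀ j : Fin m, cj j (v j) ≠ 0 :=
      fun j => ne_of_gt (lt_of_lt_of_le ((hc0 v).lt_of_ne (Ne.symm hc)) (hcjy j v))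
    exact Finset.prod_ne_zero_iff.mpr (fun j _ => this j) (he ▸ hv)
  -- LHS = ∑ v, c v * ∑ j, f j (v j)
  have hLHS : ∑ j : Fin m, ∑ y : ι, (if cj j y = 0 then 0
        else cj j y * Real.log (cj j y / D y))
      = ∑ v, c v * ∑ j, f j (v j) := by
    have h1 : ∀ j, ∑ y : ι, (if cj j y = 0 then 0 else cj j y * Real.log (cj j y / D y))
        = ∑ y : ι, cj j y * f j y := by
      intro j
      apply Finset.sum_congr rfl
      intro y _
      by_cases h : cj j y = 0 <;> simp [hfd, h]
    have h2 : ∀ j, ∑ y : ι, cj j y * f j y = ∑ v, c v * f j (v j) := by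
      intro j
      rw [hcj]
      simp only
      rw [Finset.sum_congr rfl (fun y _ => Finset.sum_mul _ _ _)]
      rw [Finset.sum_comm]
      apply Finset.sum_congr rfl
      intro v _
      rw [Finset.sum_congr rfl (fun y _ => by
        rw [ite_mul, zero_mul] :
        ∀ y ∈ Finset.univ, (if v j = y then c v else 0) * f j y
          = if v j = y then c v * f j y else 0)]
      rw [Finset.sum_ite_eq univ (v j) (fun y => c v * f j y)]
      simp
    rw [Finset.sum_congr rfl fun j _ => (h1 j).trans (h2 j)]
    rw [Finset.sum_comm]
    apply Finset.sum_congr rfl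
    intro v _
    rw [Finset.mul_sum]
  rw [hLHS]
  -- RHS - LHS = klNat c e ≥ 0
  have key : ∑ v, (if c v = 0 then 0 else c v * Real.log (c v / ∏ i, D (v i)))
      - ∑ v, c v * ∑ j, f j (v j) = klNat c e := by
    unfold klNat
    rw [← Finset.sum_sub_distrib]
    apply Finset.sum_congr rfl
    intro v _
    by_cases hcv : c v = 0
    · simp [hcv]
    · simp only [hcv, if_false]
      have hcpos : 0 < c v := (hc0 v).lt_of_ne (Ne.symm hcv)
      have hDpos : ∀ i, 0 < D (v i) :=
        fun i => (hD0 (v i)).lt_of_ne (Ne.symm (habs v hcv i))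
      have hppos : 0 < ∏ i, D (v i) := Finset.prod_pos fun i _ => hDpos i
      have hcjpos : ∀ j, 0 < cj j (v j) :=
        fun j => lt_of_lt_of_le hcpos (hcjy j v)
      have hepos : 0 < e v := Finset.prod_pos fun j _ => hcjpos j
      have hfval : ∀ j, f j (v j) = Real.log (cj j (v j)) - Real.log (D (v j)) := by
        intro j
        rw [hfd]
        simp only [(hcjpos j).ne', if_false]
        rw [Real.log_div (hcjpos j).ne' (hDpos j).ne']
      rw [Finset.sum_congr rfl fun j _ => hfval j]
      rw [Finset.sum_sub_distrib]
      rw [← Real.log_prod (fun j _ => (hcjpos j).ne'),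
          ← Real.log_prod (fun j _ => (hDpos j).ne')]
      rw [Real.log_div hcv hppos.ne', Real.log_div hcv hepos.ne']
      rw [he]
      ring
  have hkl : 0 ≤ klNat c e :=
    klNat_nonneg hc0 he0 hc1 hesum.le (fun v hv => heabs v hv)
  linarith [key.symm ▸ hkl]





private lemma perm_avg {m' : ℕ} (F : Fin (m'+1) → ℝ) (a : Fin (m'+1)) :
    ∑ pp : Equiv.Perm (Fin (m'+1)), F (pp a) = (m'.factorial : ℝ) * ∑ j, F j := by
  have h1 : ∑ pp : Equiv.Perm (Fin (m'+1)), F (pp a)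
      = ∑ pp : Equiv.Perm (Fin (m'+1)), F (pp 0) := by
    rw [← Equiv.sum_comp (Equiv.mulRight (Equiv.swap a 0))
      (fun pp : Equiv.Perm (Fin (m'+1)) => F (pp a))]
    apply Finset.sum_congr rfl
    intro pp _
    simp [Equiv.Perm.mul_apply]
  rw [h1, ← Equiv.sum_comp (Equiv.Perm.decomposeFin.symm)
    (fun pp : Equiv.Perm (Fin (m'+1)) => F (pp 0))]
  rw [Fintype.sum_prod_type]
  have : ∀ (p : Fin (m'+1)) (σ : Equiv.Perm (Fin m')),
      F (Equiv.Perm.decomposeFin.symm (p, σ) 0) = F p := by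
    intro p σ
    rw [Equiv.Perm.decomposeFin_symm_apply_zero]
  rw [Finset.sum_congr rfl fun p _ => Finset.sum_congr rfl fun σ _ => this p σ]
  rw [Finset.sum_congr rfl fun p _ => Finset.sum_const _]
  rw [← Finset.smul_sum, Finset.card_univ, Fintype.card_perm, Fintype.card_fin,
    nsmul_eq_mul]

private lemma unif_pmf {ι : Type*} [Fintype ι] [DecidableEq ι] {s : ℕ} {S : Finset ι}
    {D : ι → ℝ} (h : IsUnifOver s S D) : (∀ a, 0 ≤ D a) ∧ (∑ a, D a = 1) := by
  obtain ⟨K, hK0, _, _, hD⟩ := h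
  have hcard : 0 < K.card := Multiset.card_pos.mpr hK0
  have hcardR : (0:ℝ) < (K.card : ℝ) := by exact_mod_cast hcard
  constructor
  · intro a; rw [hD a]; positivity
  · rw [Finset.sum_congr rfl fun a _ => hD a, ← Finset.sum_div]
    rw [div_eq_one_iff_eq hcardR.ne']
    rw [← Nat.cast_sum]
    congr 1
    rw [← Multiset.toFinset_sum_count_eq K]
    apply (Finset.sum_subset (Finset.subset_univ K.toFinset) _).symm
    intro a _ ha
    rw [Multiset.count_eq_zero]
    rwa [← Multiset.mem_toFinset]

private lemma pointMass_pmf {ι : Type*} [Fintype ι] [DecidableEq ι] (y : ι) :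
    (∀ a, 0 ≤ pointMass y a) ∧ (∑ a, pointMass y a = 1) := by
  constructor
  · intro a; unfold pointMass; split <;> norm_num
  · unfold pointMass
    simp

private lemma outDist_sum {ι β : Type*} [Fintype ι] [Fintype β] [DecidableEq ι] {m : ℕ}
    (R : (Fin m → ι) → β → ℝ) (hR1 : ∀ v, ∑ b, R v b = 1)
    (D : Fin m → ι → ℝ) (hD1 : ∀ i, ∑ a, D i a = 1) :
    ∑ b, outDist R D b = 1 := by
  unfold outDist
  rw [Finset.sum_comm]
  have h1 : ∀ v : Fin m → ι, ∑ b, (∏ i, D i (v i)) * R v b = ∏ i, D i (v i) := by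
    intro v
    rw [← Finset.mul_sum, hR1, mul_one]
  rw [Finset.sum_congr rfl fun v _ => h1 v]
  have h := Finset.sum_prod_piFinset (Finset.univ : Finset ι) (fun i a => D i a)
  rw [Fintype.piFinset_univ] at h
  rw [h, Finset.prod_congr rfl fun i _ => hD1 i]
  simp

end Aux

/-- If `R` (a randomized map on `m`-tuples of `n`-bit strings) is
splitting `ℓ`-lossy for `s`-uniform distributions supported on the disjoint
nonempty sets `(S₀, S₁)`, then for every `s`-uniform distribution `D₀` supported
entirely in `S₀` or entirely in `S₁`,
`E_{y∼D₀, π}[ Δ( R(π(D₀^{⊗(m−1)}, y)), R(π(D₀^{⊗m})) ) ] ≤ δ`. -/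

theorem stmt_7 (n m s : ℕ) (hn : 0 < n) (hm : 0 < m) (hs : 0 < s)
    {β : Type*} [Fintype β]
    (ℓ : ℝ) (hℓ : 0 < ℓ)
    (S₀ S₁ : Finset (Fin n → Bool)) (hdisj : Disjoint S₀ S₁)
    (hS₀ : S₀.Nonempty) (hS₁ : S₁.Nonempty)
    (R : (Fin m → (Fin n → Bool)) → β → ℝ)
    (hR0 : ∀ v b, 0 ≤ R v b) (hR1 : ∀ v, ∑ b, R v b = 1)
    (hlossy : SplittingLossy R ℓ s S₀ S₁)
    (D₀ : (Fin n → Bool) → ℝ)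
    (hD₀ : IsUnifOver s S₀ D₀ ∨ IsUnifOver s S₁ D₀) :
    ∑ y, D₀ y * ((m.factorial : ℝ)⁻¹ * ∑ π : Equiv.Perm (Fin m),
        tv (outDist R ((fun i : Fin m => if (i : ℕ) < m - 1 then D₀ else pointMass y) ∘ π))
           (outDist R ((fun _ : Fin m => D₀) ∘ π)))
      ≤ deltaOf ℓ m := by
  classical
  obtain ⟨hD00, hD01⟩ : (∀ a, 0 ≤ D₀ a) ∧ (∑ a, D₀ a = 1) := hD₀.elim unif_pmf unif_pmf
  obtain ⟨m', rfl⟩ : ∃ m', m = m' + 1 := ⟨m - 1, by omega⟩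
  set mR : ℝ := (m' : ℝ) + 1 with hmR
  have hmRpos : 0 < mR := by positivity
  set Qd : β → ℝ := outDist R (fun _ => D₀) with hQdDef
  set Pj : Fin (m'+1) → (Fin n → Bool) → β → ℝ :=
    fun j y => outDist R (fun i => if i = j then pointMass y else D₀) with hPjDef
  set kl : Fin (m'+1) → (Fin n → Bool) → ℝ :=
    fun j y => if D₀ y = 0 then 0 else klNat (Pj j y) Qd with hklDef
  have hQdb : ∀ b, Qd b = ∑ v : Fin (m'+1) → (Fin n → Bool), (∏ i, D₀ (v i)) * R v b :=
    fun b => rfl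
  have hq0 : ∀ (v : Fin (m'+1) → (Fin n → Bool)) b, 0 ≤ (∏ i, D₀ (v i)) * R v b :=
    fun v b => mul_nonneg (Finset.prod_nonneg fun i _ => hD00 (v i)) (hR0 v b)
  have hQd0 : ∀ b, 0 ≤ Qd b := fun b => by
    rw [hQdb]; exact Finset.sum_nonneg fun v _ => hq0 v b
  have hQd1 : ∑ b, Qd b = 1 := outDist_sum R hR1 _ (fun _ => hD01)
  have hPj0 : ∀ j y b, 0 ≤ Pj j y b := by
    intro j y b
    apply Finset.sum_nonneg
    intro v _
    apply mul_nonneg _ (hR0 v b)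
    apply Finset.prod_nonneg
    intro i _
    by_cases h : i = j
    · simp only [h, if_true, eq_self_iff_true]
      exact (pointMass_pmf y).1 (v j)
    · simp only [if_neg h]; exact hD00 (v i)
  have hPj1 : ∀ j y, ∑ b, Pj j y b = 1 := by
    intro j y
    apply outDist_sum R hR1
    intro i
    by_cases h : i = j
    · simp only [h, if_true, eq_self_iff_true]; exact (pointMass_pmf y).2
    · simp only [if_neg h]; exact hD01
  have hIDi : ∀ j y b, D₀ y * Pj j y b
      = ∑ v : Fin (m'+1) → (Fin n → Bool),
          (if v j = y then (∏ i, D₀ (v i)) * R v b else 0) := by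
    intro j y b
    have hPjb : Pj j y b = ∑ v : Fin (m'+1) → (Fin n → Bool),
        (∏ i, (if i = j then pointMass y else D₀) (v i)) * R v b := rfl
    rw [hPjb, Finset.mul_sum]
    apply Finset.sum_congr rfl
    intro v _
    have hsplit : ∏ i, (if i = j then pointMass y else D₀) (v i)
        = pointMass y (v j) * ∏ i ∈ Finset.univ.erase j, D₀ (v i) := by
      rw [← Finset.mul_prod_erase Finset.univ _ (Finset.mem_univ j)]
      congr 1
      · simp
      · apply Finset.prod_congr rfl
        intro i hi
        rw [if_neg (Finset.mem_erase.mp hi).1]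
    have hsplit2 : ∏ i, D₀ (v i) = D₀ (v j) * ∏ i ∈ Finset.univ.erase j, D₀ (v i) :=
      (Finset.mul_prod_erase Finset.univ _ (Finset.mem_univ j)).symm
    rw [hsplit]
    by_cases h : v j = y
    · rw [if_pos h, hsplit2, h]
      simp [pointMass]
      ring
    · rw [if_neg h]
      have : pointMass y (v j) = 0 := by simp [pointMass, h]
      rw [this]
      ring
  have hmarg : ∀ j b, ∑ y, D₀ y * Pj j y b = Qd b := by
    intro j b
    rw [Finset.sum_congr rfl fun y _ => hIDi j y b, Finset.sum_comm, hQdb]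
    apply Finset.sum_congr rfl
    intro v _
    rw [Finset.sum_ite_eq Finset.univ (v j) (fun _ => (∏ i, D₀ (v i)) * R v b)]
    simp
  have habs : ∀ j y, D₀ y ≠ 0 → ∀ b, Qd b = 0 → Pj j y b = 0 := by
    intro j y hy b hb
    have h0 : ∑ y', D₀ y' * Pj j y' b = 0 := by rw [hmarg j b, hb]
    have hz := (Finset.sum_eq_zero_iff_of_nonneg
      (fun y' (_ : y' ∈ Finset.univ) => mul_nonneg (hD00 y') (hPj0 j y' b))).mp h0
    have := hz y (Finset.mem_univ y)
    rcases mul_eq_zero.mp this with h | h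
    · exact absurd h hy
    · exact h
  have hkl0 : ∀ j y, 0 ≤ kl j y := by
    intro j y
    by_cases hy : D₀ y = 0
    · simp [hklDef, hy]
    · simp only [hklDef, hy, if_false]
      exact klNat_nonneg (hPj0 j y) hQd0 (hPj1 j y) hQd1.le (habs j y hy)
  have htv0 : ∀ j y, 0 ≤ tv (Pj j y) Qd := fun j y => tv_nonneg
  have htvP : ∀ j y, D₀ y * tv (Pj j y) Qd ≤ D₀ y * Real.sqrt (kl j y / 2) := by
    intro j y
    by_cases hy : D₀ y = 0
    · simp [hy]
    · apply mul_le_mul_of_nonneg_left _ (hD00 y)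
      have := pinsker (hPj0 j y) hQd0 (hPj1 j y) hQd1 (habs j y hy)
      simpa [hklDef, hy] using this
  have htvB : ∀ j y, D₀ y * tv (Pj j y) Qd
      ≤ D₀ y * (1 - Real.exp (-(kl j y)) / 2) := by
    intro j y
    by_cases hy : D₀ y = 0
    · simp [hy]
    · apply mul_le_mul_of_nonneg_left _ (hD00 y)
      have := bh (hPj0 j y) hQd0 (hPj1 j y) hQd1 (habs j y hy)
      simpa [hklDef, hy] using this
  have hKbound : ∑ j, ∑ y, D₀ y * kl j y ≤ ℓ * Real.log 2 := by
    have hMI : mutualInfo (jointLaw R (fun _ => D₀)) ≤ ℓ :=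
      hlossy (fun _ => D₀) (fun _ => hD₀)
    have hlog2 : (0:ℝ) < Real.log 2 := Real.log_pos (by norm_num)
    have sub1 : ∀ j y, D₀ y * kl j y = ∑ b, (if D₀ y * Pj j y b = 0 then 0
        else (D₀ y * Pj j y b) * Real.log ((D₀ y * Pj j y b) / (D₀ y * Qd b))) := by
      intro j y
      by_cases hy : D₀ y = 0
      · simp [hy]
      · simp only [hklDef]
        rw [if_neg hy]
        unfold klNat
        rw [Finset.mul_sum]
        apply Finset.sum_congr rfl
        intro b _
        by_cases hp : Pj j y b = 0
        · simp [hp]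
        · rw [if_neg hp, if_neg (mul_ne_zero hy hp)]
          rw [mul_div_mul_left _ _ hy]
          ring
    have sub3 : Real.log 2 * mutualInfo (jointLaw R (fun _ : Fin (m'+1) => D₀))
        = ∑ b, ∑ v : Fin (m'+1) → (Fin n → Bool),
            (if (∏ i, D₀ (v i)) * R v b = 0 then 0
            else ((∏ i, D₀ (v i)) * R v b) *
              Real.log (((∏ i, D₀ (v i)) * R v b) / ((∏ i, D₀ (v i)) * Qd b))) := by
      have hrow : ∀ v : Fin (m'+1) → Fin n → Bool,
          Real.log 2 * (∑ b, (if (∏ i, D₀ (v i)) * R v b = 0 then 0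
            else ((∏ i, D₀ (v i)) * R v b) * Real.logb 2 (((∏ i, D₀ (v i)) * R v b) /
              ((∑ b', (∏ i, D₀ (v i)) * R v b') * (∑ v', (∏ i, D₀ (v' i)) * R v' b)))))
          = ∑ b, (if (∏ i, D₀ (v i)) * R v b = 0 then 0
            else ((∏ i, D₀ (v i)) * R v b) *
              Real.log (((∏ i, D₀ (v i)) * R v b) / ((∏ i, D₀ (v i)) * Qd b))) := by
        intro v
        rw [Finset.mul_sum]
        apply Finset.sum_congr rfl
        intro b _
        have hv' : ∑ b', (∏ i, D₀ (v i)) * R v b' = ∏ i, D₀ (v i) := by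
          rw [← Finset.mul_sum, hR1, mul_one]
        have hb' : ∑ v', (∏ i, D₀ (v' i)) * R v' b = Qd b := (hQdb b).symm
        by_cases hq : (∏ i, D₀ (v i)) * R v b = 0
        · simp [hq]
        · rw [if_neg hq, if_neg hq, hv', hb', Real.logb]
          rw [mul_comm (Real.log 2) _, mul_assoc, div_mul_cancel₀ _ hlog2.ne']
      simp only [mutualInfo, jointLaw]
      rw [Finset.mul_sum]
      rw [Finset.sum_congr rfl fun v (_ : v ∈ Finset.univ) => hrow v]
      exact Finset.sum_comm
    have sub2 : ∀ b, ∑ j, ∑ y, (if D₀ y * Pj j y b = 0 then 0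
        else (D₀ y * Pj j y b) * Real.log ((D₀ y * Pj j y b) / (D₀ y * Qd b)))
        ≤ ∑ v : Fin (m'+1) → (Fin n → Bool),
            (if (∏ i, D₀ (v i)) * R v b = 0 then 0
            else ((∏ i, D₀ (v i)) * R v b) *
              Real.log (((∏ i, D₀ (v i)) * R v b) / ((∏ i, D₀ (v i)) * Qd b))) := by
      intro b
      by_cases hb : Qd b = 0
      · have hqz : ∀ v : Fin (m'+1) → Fin n → Bool, (∏ i, D₀ (v i)) * R v b = 0 := by
          intro v
          have h0 : ∑ v : Fin (m'+1) → Fin n → Bool, (∏ i, D₀ (v i)) * R v b = 0 := by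
            rw [← hQdb b, hb]
          exact (Finset.sum_eq_zero_iff_of_nonneg
            (fun v _ => hq0 v b)).mp h0 v (Finset.mem_univ v)
        have hMz : ∀ j y, D₀ y * Pj j y b = 0 := by
          intro j y
          rw [hIDi]
          apply Finset.sum_eq_zero
          intro v _
          rw [hqz v]
          simp
        have e1 : ∑ j, ∑ y, (if D₀ y * Pj j y b = 0 then 0
            else (D₀ y * Pj j y b) * Real.log ((D₀ y * Pj j y b) / (D₀ y * Qd b))) = 0 := by
          apply Finset.sum_eq_zero
          intro j _
          apply Finset.sum_eq_zero
          intro y _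
          rw [hMz j y]
          simp
        have e2 : ∑ v : Fin (m'+1) → (Fin n → Bool),
            (if (∏ i, D₀ (v i)) * R v b = 0 then 0
            else ((∏ i, D₀ (v i)) * R v b) *
              Real.log (((∏ i, D₀ (v i)) * R v b) / ((∏ i, D₀ (v i)) * Qd b))) = 0 := by
          apply Finset.sum_eq_zero
          intro v _
          rw [hqz v]
          simp
        rw [e1, e2]
      · have hbpos : 0 < Qd b := (hQd0 b).lt_of_ne (Ne.symm hb)
        set c : (Fin (m'+1) → Fin n → Bool) → ℝ :=
          fun v => ((∏ i, D₀ (v i)) * R v b) / Qd b with hc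
        have hc0 : ∀ v, 0 ≤ c v := fun v => div_nonneg (hq0 v b) (hQd0 b)
        have hc1 : ∑ v, c v = 1 := by
          simp only [hc]
          rw [← Finset.sum_div, ← hQdb b, div_self hb]
        have hcabs : ∀ v, c v ≠ 0 → ∀ i, D₀ (v i) ≠ 0 := by
          intro v hv i
          have hq : (∏ i, D₀ (v i)) * R v b ≠ 0 := fun h => hv (by simp [hc, h])
          have hprod : (∏ i, D₀ (v i)) ≠ 0 := left_ne_zero_of_mul hq
          exact Finset.prod_ne_zero_iff.mp hprod i (Finset.mem_univ i)
        have hsuper := super c D₀ hc0 hc1 hD00 hcabs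
        have hL : ∀ j y, (if D₀ y * Pj j y b = 0 then 0
            else (D₀ y * Pj j y b) * Real.log ((D₀ y * Pj j y b) / (D₀ y * Qd b)))
            = Qd b * (if (∑ v, if v j = y then c v else 0) = 0 then 0
              else (∑ v, if v j = y then c v else 0) *
                Real.log ((∑ v, if v j = y then c v else 0) / D₀ y)) := by
          intro j y
          have hMc : D₀ y * Pj j y b = Qd b * ∑ v, (if v j = y then c v else 0) := by
            rw [hIDi j y b, Finset.mul_sum]
            apply Finset.sum_congr rfl
            intro v _
            by_cases h : v j = y
            · rw [if_pos h, if_pos h]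
              simp only [hc]
              rw [mul_comm (Qd b) _, div_mul_cancel₀ _ hb]
            · rw [if_neg h, if_neg h, mul_zero]
          rw [hMc]
          by_cases hcj : (∑ v, if v j = y then c v else 0) = 0
          · rw [hcj]; simp
          · rw [if_neg hcj, if_neg (mul_ne_zero hb hcj)]
            rw [mul_comm (D₀ y) (Qd b), mul_div_mul_left _ _ hb]
            ring
        have hRv : ∀ v : Fin (m'+1) → Fin n → Bool,
            (if (∏ i, D₀ (v i)) * R v b = 0 then 0
            else ((∏ i, D₀ (v i)) * R v b) *
              Real.log (((∏ i, D₀ (v i)) * R v b) / ((∏ i, D₀ (v i)) * Qd b)))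
            = Qd b * (if c v = 0 then 0 else c v * Real.log (c v / ∏ i, D₀ (v i))) := by
          intro v
          have hqc : (∏ i, D₀ (v i)) * R v b = Qd b * c v := by
            simp only [hc]
            rw [mul_comm (Qd b) _, div_mul_cancel₀ _ hb]
          by_cases hcv : c v = 0
          · rw [hqc, hcv]; simp
          · rw [hqc, if_neg (mul_ne_zero hb hcv), if_neg hcv]
            rw [mul_comm (∏ i, D₀ (v i)) (Qd b), mul_div_mul_left _ _ hb]
            ring
        rw [Finset.sum_congr rfl fun j (_ : j ∈ Finset.univ) =>
          Finset.sum_congr rfl fun y _ => hL j y]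
        rw [Finset.sum_congr rfl fun v (_ : v ∈ Finset.univ) => hRv v]
        rw [Finset.sum_congr rfl fun j (_ : j ∈ Finset.univ) =>
          (Finset.mul_sum Finset.univ _ (Qd b)).symm]
        rw [← Finset.mul_sum, ← Finset.mul_sum]
        exact mul_le_mul_of_nonneg_left hsuper (hQd0 b)
    calc ∑ j, ∑ y, D₀ y * kl j y
        = ∑ j, ∑ y, ∑ b, (if D₀ y * Pj j y b = 0 then 0
            else (D₀ y * Pj j y b) * Real.log ((D₀ y * Pj j y b) / (D₀ y * Qd b))) :=
          Finset.sum_congr rfl fun j _ => Finset.sum_congr rfl fun y _ => sub1 j y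
    _ = ∑ b, ∑ j, ∑ y, (if D₀ y * Pj j y b = 0 then 0
            else (D₀ y * Pj j y b) * Real.log ((D₀ y * Pj j y b) / (D₀ y * Qd b))) := by
          rw [Finset.sum_congr rfl fun j (_ : j ∈ Finset.univ) => Finset.sum_comm]
          exact Finset.sum_comm
    _ ≤ ∑ b, ∑ v : Fin (m'+1) → (Fin n → Bool),
            (if (∏ i, D₀ (v i)) * R v b = 0 then 0
            else ((∏ i, D₀ (v i)) * R v b) *
              Real.log (((∏ i, D₀ (v i)) * R v b) / ((∏ i, D₀ (v i)) * Qd b))) :=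
          Finset.sum_le_sum fun b _ => sub2 b
    _ = Real.log 2 * mutualInfo (jointLaw R (fun _ : Fin (m'+1) => D₀)) := sub3.symm
    _ ≤ Real.log 2 * ℓ := mul_le_mul_of_nonneg_left hMI hlog2.le
    _ = ℓ * Real.log 2 := mul_comm _ _
  -- Step A : rewrite the permutation average
  have hπ : ∀ y, (∑ π : Equiv.Perm (Fin (m'+1)),
        tv (outDist R ((fun i : Fin (m'+1) =>
              if (i : ℕ) < m' + 1 - 1 then D₀ else pointMass y) ∘ π))
           (outDist R ((fun _ : Fin (m'+1) => D₀) ∘ π)))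
      = (m'.factorial : ℝ) * ∑ j, tv (Pj j y) Qd := by
    intro y
    have hlast : (m' : ℕ) < m' + 1 := Nat.lt_succ_self m'
    have hc1 : ∀ π : Equiv.Perm (Fin (m'+1)),
        ((fun i : Fin (m'+1) => if (i : ℕ) < m' + 1 - 1 then D₀ else pointMass y) ∘ π)
        = (fun i => if i = π.symm ⟨m', hlast⟩ then pointMass y else D₀) := by
      intro π
      funext i
      simp only [Function.comp_apply, Nat.add_sub_cancel]
      by_cases h : i = π.symm ⟨m', hlast⟩
      · rw [if_pos h, h, Equiv.apply_symm_apply]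
        simp
      · have hne : π i ≠ ⟨m', hlast⟩ := fun hc => h (by rw [← hc, Equiv.symm_apply_apply])
        have hlt : ((π i : Fin (m'+1)) : ℕ) < m' :=
          lt_of_le_of_ne (Nat.lt_succ_iff.mp (π i).isLt) (fun hc => hne (Fin.ext hc))
        rw [if_pos hlt, if_neg h]
    have hc2 : ∀ π : Equiv.Perm (Fin (m'+1)),
        outDist R ((fun _ : Fin (m'+1) => D₀) ∘ π) = Qd := fun π => rfl
    have hterm : ∀ π : Equiv.Perm (Fin (m'+1)),
        tv (outDist R ((fun i : Fin (m'+1) =>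
            if (i : ℕ) < m' + 1 - 1 then D₀ else pointMass y) ∘ π))
          (outDist R ((fun _ : Fin (m'+1) => D₀) ∘ π))
        = tv (Pj (π.symm ⟨m', hlast⟩) y) Qd := by
      intro π
      rw [hc1 π, hc2 π]
    rw [Finset.sum_congr rfl fun π _ => hterm π]
    have hswap : ∑ π : Equiv.Perm (Fin (m'+1)), tv (Pj (π.symm ⟨m', hlast⟩) y) Qd
        = ∑ π : Equiv.Perm (Fin (m'+1)), tv (Pj (π ⟨m', hlast⟩) y) Qd := by
      rw [← Equiv.sum_comp (Equiv.inv (Equiv.Perm (Fin (m'+1))))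
        (fun π : Equiv.Perm (Fin (m'+1)) => tv (Pj (π ⟨m', hlast⟩) y) Qd)]
      apply Finset.sum_congr rfl
      intro π _
      rfl
    rw [hswap, perm_avg (fun j => tv (Pj j y) Qd) ⟨m', hlast⟩]
  simp only [hπ]
  have hfact : ∀ (x : ℝ), (((m'+1).factorial : ℝ))⁻¹ * ((m'.factorial : ℝ) * x) = mR⁻¹ * x := by
    intro x
    rw [Nat.factorial_succ]
    push_cast
    rw [hmR]
    have hne : (m'.factorial : ℝ) ≠ 0 := by positivity
    field_simp
  simp only [hfact]
  have hgoal : ∑ y, D₀ y * (mR⁻¹ * ∑ j, tv (Pj j y) Qd)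
      = mR⁻¹ * ∑ j, ∑ y, D₀ y * tv (Pj j y) Qd := by
    simp only [Finset.mul_sum]
    rw [Finset.sum_comm]
    exact Finset.sum_congr rfl fun j _ => Finset.sum_congr rfl fun y _ => by ring
  rw [hgoal]
  have hlog2 : (0:ℝ) < Real.log 2 := Real.log_pos (by norm_num)
  have hcast : (((m'+1 : ℕ)) : ℝ) = mR := by rw [hmR]; push_cast; ring
  set A := ∑ j, ∑ y, D₀ y * tv (Pj j y) Qd with hA
  set KT := ∑ j, ∑ y, D₀ y * kl j y with hKT
  have hA0 : 0 ≤ A :=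
    Finset.sum_nonneg fun j _ => Finset.sum_nonneg fun y _ =>
      mul_nonneg (hD00 y) (htv0 j y)
  have hKT0 : 0 ≤ KT :=
    Finset.sum_nonneg fun j _ => Finset.sum_nonneg fun y _ =>
      mul_nonneg (hD00 y) (hkl0 j y)
  have hsumD : ∑ z : Fin (m'+1) × (Fin n → Bool), D₀ z.2 = mR := by
    rw [Fintype.sum_prod_type]
    rw [Finset.sum_congr rfl fun j (_ : j ∈ Finset.univ) => hD01]
    rw [Finset.sum_const, Finset.card_univ, Fintype.card_fin, nsmul_eq_mul, mul_one, hcast]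
  rw [deltaOf]
  apply le_min
  · -- Pinsker bound
    rw [hcast]
    set B := ∑ j, ∑ y, D₀ y * Real.sqrt (kl j y / 2) with hB
    have hAB : A ≤ B :=
      Finset.sum_le_sum fun j _ => Finset.sum_le_sum fun y _ => htvP j y
    have hB0 : 0 ≤ B :=
      Finset.sum_nonneg fun j _ => Finset.sum_nonneg fun y _ =>
        mul_nonneg (hD00 y) (Real.sqrt_nonneg _)
    have hBsq : B^2 ≤ mR * (KT / 2) := by
      have hBz : B = ∑ z : Fin (m'+1) × (Fin n → Bool),
          Real.sqrt (D₀ z.2) * (Real.sqrt (D₀ z.2) * Real.sqrt (kl z.1 z.2 / 2)) := by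
        rw [hB, Fintype.sum_prod_type]
        apply Finset.sum_congr rfl
        intro j _
        apply Finset.sum_congr rfl
        intro y _
        rw [← mul_assoc, Real.mul_self_sqrt (hD00 y)]
      have hcs := Finset.sum_mul_sq_le_sq_mul_sq Finset.univ
        (fun z : Fin (m'+1) × (Fin n → Bool) => Real.sqrt (D₀ z.2))
        (fun z => Real.sqrt (D₀ z.2) * Real.sqrt (kl z.1 z.2 / 2))
      have hf2 : ∑ z : Fin (m'+1) × (Fin n → Bool), (Real.sqrt (D₀ z.2))^2 = mR := by
        rw [Finset.sum_congr rfl fun z (_ : z ∈ Finset.univ) => Real.sq_sqrt (hD00 z.2)]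
        exact hsumD
      have hg2 : ∑ z : Fin (m'+1) × (Fin n → Bool),
          (Real.sqrt (D₀ z.2) * Real.sqrt (kl z.1 z.2 / 2))^2 = KT / 2 := by
        have hterm : ∀ z : Fin (m'+1) × (Fin n → Bool),
            (Real.sqrt (D₀ z.2) * Real.sqrt (kl z.1 z.2 / 2))^2
            = D₀ z.2 * kl z.1 z.2 / 2 := by
          intro z
          rw [mul_pow, Real.sq_sqrt (hD00 z.2),
            Real.sq_sqrt (by linarith [hkl0 z.1 z.2] : (0:ℝ) ≤ kl z.1 z.2 / 2)]
          ring
        rw [Finset.sum_congr rfl fun z _ => hterm z, ← Finset.sum_div]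
        rw [hKT, Fintype.sum_prod_type]
      rw [hBz]
      calc (∑ z : Fin (m'+1) × (Fin n → Bool),
            Real.sqrt (D₀ z.2) * (Real.sqrt (D₀ z.2) * Real.sqrt (kl z.1 z.2 / 2)))^2
          ≤ (∑ z : Fin (m'+1) × (Fin n → Bool), (Real.sqrt (D₀ z.2))^2) *
            ∑ z : Fin (m'+1) × (Fin n → Bool),
              (Real.sqrt (D₀ z.2) * Real.sqrt (kl z.1 z.2 / 2))^2 := hcs
      _ = mR * (KT / 2) := by rw [hf2, hg2]
    have h1 : A^2 ≤ mR * (ℓ * Real.log 2 / 2) := by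
      calc A^2 ≤ B^2 := pow_le_pow_left₀ hA0 hAB 2
      _ ≤ mR * (KT / 2) := hBsq
      _ ≤ mR * (ℓ * Real.log 2 / 2) := by
          apply mul_le_mul_of_nonneg_left _ hmRpos.le
          linarith [hKbound]
    rw [Real.le_sqrt (by positivity) (by positivity)]
    have h2 : (mR⁻¹ * A)^2 = mR⁻¹^2 * A^2 := by ring
    rw [h2]
    have h3 : mR⁻¹^2 * A^2 ≤ mR⁻¹^2 * (mR * (ℓ * Real.log 2 / 2)) :=
      mul_le_mul_of_nonneg_left h1 (by positivity)
    have h4 : mR⁻¹^2 * (mR * (ℓ * Real.log 2 / 2)) = ℓ * Real.log 2 / (2 * mR) := by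
      field_simp
    linarith
  · -- Bretagnolle–Huber style bound
    rw [hcast]
    have hw0 : ∀ z : Fin (m'+1) × (Fin n → Bool), 0 ≤ D₀ z.2 / mR :=
      fun z => div_nonneg (hD00 z.2) hmRpos.le
    have hw1 : ∑ z : Fin (m'+1) × (Fin n → Bool), D₀ z.2 / mR = 1 := by
      rw [← Finset.sum_div, hsumD, div_self hmRpos.ne']
    have hjensen := convexOn_exp.map_sum_le (t := Finset.univ)
      (w := fun z : Fin (m'+1) × (Fin n → Bool) => D₀ z.2 / mR)
      (p := fun z => -(kl z.1 z.2))
      (fun z _ => hw0 z) hw1 (fun z _ => Set.mem_univ _)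
    simp only [smul_eq_mul] at hjensen
    have hzsum : ∑ z : Fin (m'+1) × (Fin n → Bool), D₀ z.2 / mR * (-(kl z.1 z.2))
        = -(KT / mR) := by
      calc ∑ z : Fin (m'+1) × (Fin n → Bool), D₀ z.2 / mR * (-(kl z.1 z.2))
          = ∑ z : Fin (m'+1) × (Fin n → Bool), -(D₀ z.2 * kl z.1 z.2) / mR :=
            Finset.sum_congr rfl fun z _ => by ring
      _ = (∑ z : Fin (m'+1) × (Fin n → Bool), -(D₀ z.2 * kl z.1 z.2)) / mR := by
            rw [Finset.sum_div]
      _ = -(∑ z : Fin (m'+1) × (Fin n → Bool), D₀ z.2 * kl z.1 z.2) / mR := by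
            rw [Finset.sum_neg_distrib]
      _ = -(KT / mR) := by rw [hKT, Fintype.sum_prod_type, neg_div]
    have hstep1 : mR⁻¹ * A
        = ∑ z : Fin (m'+1) × (Fin n → Bool), D₀ z.2 / mR * tv (Pj z.1 z.2) Qd := by
      rw [hA, Fintype.sum_prod_type, Finset.mul_sum]
      apply Finset.sum_congr rfl
      intro j _
      rw [Finset.mul_sum]
      apply Finset.sum_congr rfl
      intro y _
      ring
    have hstep2 : ∑ z : Fin (m'+1) × (Fin n → Bool), D₀ z.2 / mR * tv (Pj z.1 z.2) Qd
        ≤ ∑ z : Fin (m'+1) × (Fin n → Bool),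
            D₀ z.2 / mR * (1 - Real.exp (-(kl z.1 z.2)) / 2) := by
      apply Finset.sum_le_sum
      intro z _
      have := htvB z.1 z.2
      have h' := mul_le_mul_of_nonneg_left this (le_of_lt (inv_pos.mpr hmRpos))
      calc D₀ z.2 / mR * tv (Pj z.1 z.2) Qd
          = mR⁻¹ * (D₀ z.2 * tv (Pj z.1 z.2) Qd) := by ring
      _ ≤ mR⁻¹ * (D₀ z.2 * (1 - Real.exp (-(kl z.1 z.2)) / 2)) := h'
      _ = D₀ z.2 / mR * (1 - Real.exp (-(kl z.1 z.2)) / 2) := by ring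
    have hstep3 : ∑ z : Fin (m'+1) × (Fin n → Bool),
          D₀ z.2 / mR * (1 - Real.exp (-(kl z.1 z.2)) / 2)
        = 1 - (1/2) * ∑ z : Fin (m'+1) × (Fin n → Bool),
            D₀ z.2 / mR * Real.exp (-(kl z.1 z.2)) := by
      have hterm3 : ∀ z : Fin (m'+1) × (Fin n → Bool),
          D₀ z.2 / mR * (1 - Real.exp (-(kl z.1 z.2)) / 2)
          = D₀ z.2 / mR - (1/2) * (D₀ z.2 / mR * Real.exp (-(kl z.1 z.2))) :=
        fun z => by ring
      rw [Finset.sum_congr rfl fun z _ => hterm3 z]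
      rw [Finset.sum_sub_distrib, hw1, ← Finset.mul_sum]
    have hstep4 : Real.exp (-(ℓ * Real.log 2 / mR))
        ≤ ∑ z : Fin (m'+1) × (Fin n → Bool), D₀ z.2 / mR * Real.exp (-(kl z.1 z.2)) := by
      apply le_trans _ hjensen
      rw [hzsum]
      apply Real.exp_le_exp.mpr
      exact neg_le_neg ((div_le_div_iff_of_pos_right hmRpos).mpr hKbound)
    have hrpow : (2:ℝ) ^ (-(ℓ / mR) - 2) ≤ (1/2) * Real.exp (-(ℓ * Real.log 2 / mR)) := by
      rw [Real.rpow_def_of_pos (by norm_num : (0:ℝ) < 2)]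
      have hhalf : (1/2 : ℝ) = Real.exp (-(Real.log 2)) := by
        rw [Real.exp_neg, Real.exp_log (by norm_num : (0:ℝ) < 2)]
        norm_num
      rw [hhalf, ← Real.exp_add]
      apply Real.exp_le_exp.mpr
      have he : -(Real.log 2) + -(ℓ * Real.log 2 / mR) = Real.log 2 * (-(ℓ/mR) - 1) := by
        field_simp
        ring
      rw [he]
      apply mul_le_mul_of_nonneg_left _ hlog2.le
      linarith
    have hle1 : mR⁻¹ * A ≤ 1 - (1/2) * ∑ z : Fin (m'+1) × (Fin n → Bool),
        D₀ z.2 / mR * Real.exp (-(kl z.1 z.2)) := by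
      rw [hstep1, ← hstep3]
      exact hstep2
    linarith [hstep4, hrpow, hle1]
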